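/- arXiv:2203.05108 — 4 statements merged into one kernel-verified Lean document; each statement's English description precedes it below -/
import Mathlib

section
/- For every constant c < log₂(e) there exists a positive integer n such that every probability distribution C that couples MajorizingSet(U_n), where U_n is the uniform distribution on n states, satisfies H(C) > log₂(n) + c. Consequently, there is no algorithm A such that for all instances S the coupling A_S it outputs satisfies H(A_S) ≤ H(∧S) + c for some constant c < log₂(e). -/
/-!
A coupling of every `q ≽ U_n` couples in particular the spike distributions
`(1 - (n - 1) x, x, …, x)` with `x ≤ 1 / n`. An atom of `C` heavier than `x` cannot lie in a
fibre of mass `x`, so the tails `T k = ∑_{j ≥ k} C j` satisfy `T (k + 1) ≥ (1 - 1 / n) T k`.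
Thus the tails of `C` dominate those of the geometric distribution `(1 - r) r ^ j`,
`r = 1 - 1 / n`, and by Schur-concavity of entropy `H(C) ≥ H(geom r) ≥ ln n + 1 - 1 / n` nats,
that is `log₂ n + (1 - 1 / n) log₂ e` bits.
-/

open Finset Real

/-- `q` is a member of `MajorizingSet p`: a sorted distribution on `n` states
whose prefix sums dominate those of `p` (i.e. `p ≼ q`). -/
def MajMem {n : ℕ} (p q : Fin n → ℝ) : Prop :=
  Antitone q ∧ (∀ k, 0 ≤ q k) ∧ (∑ k, q k = 1) ∧
    ∀ i : Fin n, ∑ j ∈ Finset.Iic i, p j ≤ ∑ j ∈ Finset.Iic i, q j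

/-- The distribution `C` couples the distribution `q` on `n` states. -/
def Couples {n : ℕ} (C : ℕ → ℝ) (q : Fin n → ℝ) : Prop :=
  ∃ f : ℕ → Fin n, ∀ i : Fin n, ∑' j : {j : ℕ // f j = i}, C j.1 = q i

noncomputable def tailSum (f : ℕ → ℝ) (k : ℕ) : ℝ := ∑' j, f (j + k)

section Tails

variable {f : ℕ → ℝ}

lemma tailSum_zero : tailSum f 0 = ∑' j, f j := by
  simp [tailSum]

lemma tailSum_nonneg (h0 : ∀ j, 0 ≤ f j) (k : ℕ) : 0 ≤ tailSum f k :=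
  tsum_nonneg fun _ => h0 _

lemma sum_range_add_tailSum (hf : Summable f) (k : ℕ) :
    ∑ j ∈ range k, f j + tailSum f k = ∑' j, f j :=
  hf.sum_add_tsum_nat_add k

lemma tailSum_le_tsum (h0 : ∀ j, 0 ≤ f j) (hf : Summable f) (k : ℕ) :
    tailSum f k ≤ ∑' j, f j := by
  rw [← sum_range_add_tailSum hf k]
  linarith [sum_nonneg fun j (_ : j ∈ range k) => h0 j]

lemma tailSum_eq_add_tailSum_succ (hf : Summable f) (k : ℕ) :
    tailSum f k = f k + tailSum f (k + 1) := by
  have := sum_range_add_tailSum hf (k + 1)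
  rw [sum_range_succ, ← sum_range_add_tailSum hf k] at this
  linarith

lemma Antitone.pos_of_tailSum_pos (hf : Antitone f) (h0 : ∀ j, 0 ≤ f j) {k : ℕ}
    (hk : 0 < tailSum f k) : 0 < f k := by
  by_contra! hle
  have hzero : ∀ j, f (j + k) = 0 := fun j =>
    le_antisymm ((hf (Nat.le_add_left k j)).trans hle) (h0 _)
  simp [tailSum, hzero] at hk

end Tails

section Geometric

variable {r : ℝ}

def geomDist (r : ℝ) (j : ℕ) : ℝ := (1 - r) * r ^ j

lemma tailSum_geomDist (hr0 : 0 ≤ r) (hr1 : r < 1) (k : ℕ) : tailSum (geomDist r) k = r ^ k := by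
  have h1r : 1 - r ≠ 0 := by linarith
  simp only [tailSum, geomDist, pow_add, ← mul_assoc]
  rw [tsum_mul_right, tsum_mul_left, tsum_geometric_of_lt_one hr0 hr1]
  field_simp

lemma hasSum_geomDist (hr0 : 0 ≤ r) (hr1 : r < 1) : HasSum (geomDist r) 1 := by
  have h1r : 1 - r ≠ 0 := by linarith
  have := (hasSum_geometric_of_lt_one hr0 hr1).mul_left (1 - r)
  rwa [mul_inv_cancel₀ h1r] at this

lemma hasSum_negMulLog_geomDist (hr0 : 0 < r) (hr1 : r < 1) :
    HasSum (fun j => negMulLog (geomDist r j)) (-log (1 - r) - r / (1 - r) * log r) := by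
  have h1r : 0 < 1 - r := by linarith
  have hgeom := (hasSum_geometric_of_lt_one hr0.le hr1).mul_left (-(1 - r) * log (1 - r))
  have hcoe := (hasSum_coe_mul_geometric_of_norm_lt_one
    (by rwa [norm_of_nonneg hr0.le] : ‖r‖ < 1)).mul_left (-(1 - r) * log r)
  have hterm : (fun j => negMulLog (geomDist r j))
      = fun j : ℕ => -(1 - r) * log (1 - r) * r ^ j + -(1 - r) * log r * (j * r ^ j) := by
    funext j
    rw [geomDist, negMulLog, log_mul h1r.ne' (pow_ne_zero j hr0.ne'), log_pow]
    ring
  have hval : -log (1 - r) - r / (1 - r) * log r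
      = -(1 - r) * log (1 - r) * (1 - r)⁻¹ + -(1 - r) * log r * (r / (1 - r) ^ 2) := by
    field_simp
    ring
  rw [hterm, hval]
  exact hgeom.add hcoe

end Geometric

lemma negMulLog_add_mul_sub_le_negMulLog {p q : ℝ} (hp : 0 < p) (hq : 0 ≤ q) :
    negMulLog q + (-log p - 1) * (p - q) ≤ negMulLog p := by
  rcases hq.eq_or_lt with rfl | hq
  · simp only [negMulLog, sub_zero]
    linarith
  · have hlog := mul_le_mul_of_nonneg_left (log_le_sub_one_of_pos (div_pos hp hq)) hq.le
    rw [log_div hp.ne' hq.ne', mul_sub_one, mul_div_cancel₀ _ hq.ne'] at hlog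
    simp only [negMulLog]
    linarith

lemma Monotone.sum_range_mul_sub_succ_add_nonneg {b E : ℕ → ℝ} (hb : Monotone b)
    (hE0 : E 0 = 0) (hE : ∀ j, 0 ≤ E j) (N : ℕ) :
    0 ≤ ∑ j ∈ range N, b j * (E j - E (j + 1)) + b N * E N := by
  induction N with
  | zero => simp [hE0]
  | succ N ih =>
    rw [sum_range_succ]
    nlinarith [mul_nonneg (sub_nonneg.2 (hb N.le_succ)) (hE (N + 1))]

section Entropy

variable {C : ℕ → ℝ}

lemma neg_log_mul_tailSum_le_tailSum_negMulLog (hC : Antitone C) (hCpos : ∀ j, 0 < C j)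
    (hCs : Summable C) (hs : Summable fun j => negMulLog (C j)) (N : ℕ) :
    -log (C N) * tailSum C N ≤ tailSum (fun j => negMulLog (C j)) N := by
  rw [tailSum, tailSum, ← tsum_mul_left]
  refine Summable.tsum_le_tsum (fun j => ?_) (((summable_nat_add_iff N).2 hCs).mul_left _)
    ((summable_nat_add_iff N).2 hs)
  have := log_le_log (hCpos _) (hC (Nat.le_add_left N j))
  rw [negMulLog]
  nlinarith [hCpos (j + N)]

/-- Schur-concavity of entropy: compare `negMulLog (G j)` with the tangent line of `negMulLog` at
`C j` and sum by parts, the slopes `-log (C j) - 1` increasing and the excess tails `E` being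
nonnegative. -/
lemma hasSum_negMulLog_le_of_tailSum_le {G : ℕ → ℝ} {h y : ℝ} (hC : Antitone C)
    (hCpos : ∀ j, 0 < C j) (hG0 : ∀ j, 0 ≤ G j) (hC1 : HasSum C 1) (hG1 : HasSum G 1)
    (htail : ∀ k, tailSum G k ≤ tailSum C k) (hG : HasSum (fun j => negMulLog (G j)) h)
    (hy : HasSum (fun j => negMulLog (C j)) y) : h ≤ y := by
  set b : ℕ → ℝ := fun j => -log (C j) - 1
  set E : ℕ → ℝ := fun j => tailSum C j - tailSum G j
  have hb : Monotone b := fun i j hij => by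
    have := log_le_log (hCpos j) (hC hij)
    simp only [b]
    linarith
  have hE0 : E 0 = 0 := by simp [E, tailSum_zero, hC1.tsum_eq, hG1.tsum_eq]
  have hdiff : ∀ j, C j - G j = E j - E (j + 1) := fun j => by
    simp only [E, tailSum_eq_add_tailSum_succ hC1.summable j,
      tailSum_eq_add_tailSum_succ hG1.summable j]
    ring
  have hEle : ∀ N, b N * E N ≤ -log (C N) * tailSum C N := fun N => by
    have hCN : C N ≤ 1 :=
      hC1.tsum_eq ▸ hC1.summable.le_tsum N fun j _ => (hCpos j).le
    have hlogC := log_nonpos (hCpos N).le hCN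
    have hGtail := tailSum_nonneg hG0 N
    have hEN := sub_nonneg.2 (htail N)
    simp only [b, E]
    nlinarith
  rw [← hG.tsum_eq, ← hy.tsum_eq]
  refine hG.summable.tsum_le_of_sum_range_le fun N => ?_
  calc ∑ j ∈ range N, negMulLog (G j)
      ≤ ∑ j ∈ range N, (negMulLog (C j) - b j * (E j - E (j + 1))) :=
        sum_le_sum fun j _ => by
          rw [← hdiff]
          linarith [negMulLog_add_mul_sub_le_negMulLog (hCpos j) (hG0 j)]
    _ ≤ ∑ j ∈ range N, negMulLog (C j) + b N * E N := by
        rw [sum_sub_distrib]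
        linarith [hb.sum_range_mul_sub_succ_add_nonneg hE0 (fun j => sub_nonneg.2 (htail j)) N]
    _ ≤ ∑ j ∈ range N, negMulLog (C j) + tailSum (fun j => negMulLog (C j)) N := by
        grw [hEle N, neg_log_mul_tailSum_le_tailSum_negMulLog hC hCpos hC1.summable hy.summable]
    _ = ∑' j, negMulLog (C j) := sum_range_add_tailSum hy.summable N

lemma neg_log_one_sub_add_le_of_pow_le_tailSum {r y : ℝ} (hC : Antitone C) (h0 : ∀ j, 0 ≤ C j)
    (hC1 : HasSum C 1) (hr0 : 0 < r) (hr1 : r < 1) (htail : ∀ k, r ^ k ≤ tailSum C k)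
    (hy : HasSum (fun j => negMulLog (C j)) y) : -log (1 - r) + r ≤ y := by
  have hCpos : ∀ j, 0 < C j := fun j =>
    hC.pos_of_tailSum_pos h0 ((pow_pos hr0 j).trans_le (htail j))
  have hgeom := hasSum_negMulLog_le_of_tailSum_le hC hCpos
    (fun j => mul_nonneg (by linarith) (pow_nonneg hr0.le j)) hC1 (hasSum_geomDist hr0.le hr1)
    (fun k => (tailSum_geomDist hr0.le hr1 k).trans_le (htail k))
    (hasSum_negMulLog_geomDist hr0 hr1) hy
  have hlog : r * (1 - r) ≤ r * -log r :=
    mul_le_mul_of_nonneg_left (by linarith [log_le_sub_one_of_pos hr0]) hr0.le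
  have : r ≤ -(r / (1 - r) * log r) := by
    rw [div_mul_eq_mul_div, ← neg_div, le_div_iff₀ (by linarith)]
    linarith
  linarith

end Entropy

section Coupling

variable {n : ℕ} {C : ℕ → ℝ}

lemma sum_le_of_forall_mem_fiber {q : Fin n → ℝ} (h0 : ∀ j, 0 ≤ C j) (hs : Summable C)
    {f : ℕ → Fin n} {i : Fin n} (hf : ∑' j : {j : ℕ // f j = i}, C j.1 = q i) {s : Finset ℕ}
    (hsf : ∀ j ∈ s, f j = i) : ∑ j ∈ s, C j ≤ q i :=
  calc ∑ j ∈ s, C j = ∑ j ∈ s, Set.indicator {j | f j = i} C j :=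
        sum_congr rfl fun j hj => (Set.indicator_of_mem (s := {j | f j = i}) (hsf j hj) C).symm
    _ ≤ ∑' j, Set.indicator {j | f j = i} C j :=
        (hs.indicator _).sum_le_tsum _ fun j _ => Set.indicator_nonneg (fun j _ => h0 j) j
    _ = q i := hf ▸ (tsum_subtype {j | f j = i} C).symm

variable [NeZero n]

def spikeDist (n : ℕ) [NeZero n] (x : ℝ) : Fin n → ℝ :=
  fun i => x + if i = 0 then 1 - n * x else 0

lemma sum_spikeDist (x : ℝ) (s : Finset (Fin n)) (hs : 0 ∈ s) :
    ∑ i ∈ s, spikeDist n x i = #s * x + (1 - n * x) := by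
  simp [spikeDist, sum_add_distrib, hs]

lemma majMem_uniform_spikeDist {x : ℝ} (hx0 : 0 ≤ x) (hx : n * x ≤ 1) :
    MajMem (fun _ => (1 / n : ℝ)) (spikeDist n x) := by
  have hspike : ∀ i, x ≤ spikeDist n x i := fun i => by
    simp only [spikeDist]
    split_ifs <;> linarith
  refine ⟨fun i j hij => ?_, fun i => hx0.trans (hspike i), ?_, fun i => ?_⟩
  · by_cases hj : j = 0
    · obtain rfl : i = 0 := le_antisymm (hj ▸ hij) (Fin.zero_le i)
      rw [hj]
    · simpa [spikeDist, hj] using hspike i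
  · rw [sum_spikeDist x univ (mem_univ 0), card_univ, Fintype.card_fin]
    ring
  · have hn : (0 : ℝ) < n := by exact_mod_cast Nat.pos_of_neZero n
    have hcard : (#(Iic i) : ℝ) ≤ n := by exact_mod_cast card_le_univ (Iic i) |>.trans_eq (by simp)
    rw [sum_spikeDist x _ (mem_Iic.2 (Fin.zero_le i)), sum_const, nsmul_eq_mul]
    have : #(Iic i) * x + (1 - n * x) - #(Iic i) * (1 / n)
        = (n - #(Iic i)) * (1 - n * x) / n := by
      field_simp
      ring
    have : 0 ≤ (n - #(Iic i) : ℝ) * (1 - n * x) / n :=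
      div_nonneg (mul_nonneg (by linarith) (by linarith)) hn.le
    linarith

/-- Atoms larger than `x` cannot lie in a fibre of mass `x`, so all of `C 0, …, C k` go to the
spike. -/
lemma mul_le_tailSum_of_couples_spikeDist (hC : Antitone C) (h0 : ∀ j, 0 ≤ C j)
    (hC1 : HasSum C 1) {x : ℝ} (hcpl : Couples C (spikeDist n x)) {k : ℕ} (hk : x < C k) :
    (n - 1) * x ≤ tailSum C (k + 1) := by
  obtain ⟨f, hf⟩ := hcpl
  have hfib : ∀ j ∈ range (k + 1), f j = 0 := fun j hj => by
    by_contra hne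
    have := sum_le_of_forall_mem_fiber h0 hC1.summable (hf (f j)) (s := {j}) (by simp)
    rw [sum_singleton, spikeDist, if_neg hne, add_zero] at this
    linarith [hC (Nat.lt_succ_iff.1 (mem_range.1 hj))]
  have hhead := sum_le_of_forall_mem_fiber h0 hC1.summable (hf 0) hfib
  have hsplit := sum_range_add_tailSum hC1.summable (k + 1)
  rw [hC1.tsum_eq] at hsplit
  simp only [spikeDist, if_pos] at hhead
  linarith

lemma pow_le_tailSum_of_couples (hC : Antitone C) (h0 : ∀ j, 0 ≤ C j) (hC1 : HasSum C 1)
    (hcpl : ∀ q : Fin n → ℝ, MajMem (fun _ => (1 / n : ℝ)) q → Couples C q) (k : ℕ) :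
    (1 - 1 / n : ℝ) ^ k ≤ tailSum C k := by
  have hn : (1 : ℝ) ≤ n := by exact_mod_cast Nat.one_le_iff_ne_zero.2 (NeZero.ne n)
  have hstep : ∀ k, (1 - 1 / n : ℝ) * tailSum C k ≤ tailSum C (k + 1) := fun k => by
    have hrec := tailSum_eq_add_tailSum_succ hC1.summable k
    by_cases hk : C k ≤ tailSum C k / n
    · have : (1 - 1 / n : ℝ) * tailSum C k = tailSum C k - tailSum C k / n := by ring
      linarith
    · rw [not_le] at hk
      have hT1 : tailSum C k ≤ 1 := hC1.tsum_eq ▸ tailSum_le_tsum h0 hC1.summable k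
      have hx0 : 0 ≤ tailSum C k / n := div_nonneg (tailSum_nonneg h0 k) (by linarith)
      have hmaj := majMem_uniform_spikeDist hx0 (by rwa [mul_div_cancel₀ _ (by positivity)])
      calc (1 - 1 / n : ℝ) * tailSum C k = (n - 1) * (tailSum C k / n) := by field_simp
        _ ≤ tailSum C (k + 1) :=
          mul_le_tailSum_of_couples_spikeDist hC h0 hC1 (hcpl _ hmaj) hk
  induction k with
  | zero => simp [tailSum_zero, hC1.tsum_eq]
  | succ k ih =>
    have hr : (0 : ℝ) ≤ 1 - 1 / n := by
      rw [sub_nonneg, div_le_one (by linarith)]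
      exact hn
    calc (1 - 1 / n : ℝ) ^ (k + 1) = (1 - 1 / n) * (1 - 1 / n) ^ k := pow_succ' _ _
      _ ≤ (1 - 1 / n) * tailSum C k := by gcongr
      _ ≤ tailSum C (k + 1) := hstep k

end Coupling

/-- **Theorem 5 (tightness of the `log₂ e` gap).**
For every constant `c < log₂ e` there is an `n` such that every distribution `C`
coupling `MajorizingSet U_n` (with `U_n` uniform on `n` states, so
`H(∧ MajorizingSet U_n) = log₂ n`) has entropy `H(C) > log₂ n + c`.
(The entropy of `C` is expressed via `HasSum`; a `C` with divergent — i.e. infinite —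
entropy satisfies the bound vacuously.)  Consequently no algorithm can guarantee
entropy at most `H(∧S) + c` for any constant `c < log₂ e`. -/
theorem no_better_than_log2e_additive_gap
    (c : ℝ) (hc : c < Real.logb 2 (Real.exp 1)) :
    ∃ n : ℕ, 0 < n ∧
      ∀ C : ℕ → ℝ, Antitone C → (∀ j, 0 ≤ C j) → HasSum C 1 →
        (∀ q : Fin n → ℝ, MajMem (fun _ => (1 / n : ℝ)) q → Couples C q) →
        ∀ x : ℝ, HasSum (fun j => C j * Real.logb 2 (C j)⁻¹) x →
          Real.logb 2 n + c < x := by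
  have hlog2 : 0 < log 2 := log_pos one_lt_two
  have hc' : c * log 2 < 1 := by
    rwa [logb, log_exp, lt_div_iff₀ hlog2] at hc
  obtain ⟨m, hm⟩ := exists_nat_one_div_lt (sub_pos.2 hc')
  refine ⟨m + 2, by omega, fun C hC h0 hC1 hcpl x hx => ?_⟩
  have hn : (1 / (m + 2 : ℕ) : ℝ) < 1 - c * log 2 := by
    refine lt_of_le_of_lt ?_ hm
    gcongr
    push_cast
    linarith
  have hy : HasSum (fun j => negMulLog (C j)) (x * log 2) := by
    have hterm : (fun j => negMulLog (C j)) = fun j => C j * logb 2 (C j)⁻¹ * log 2 :=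
      funext fun j => by
        rw [negMulLog, logb, log_inv]
        field_simp
    rw [hterm]
    exact hx.mul_right _
  have hr0 : (0 : ℝ) < 1 - 1 / (m + 2 : ℕ) := by
    rw [sub_pos, div_lt_one (by positivity)]
    push_cast
    linarith
  have hH := neg_log_one_sub_add_le_of_pow_le_tailSum hC h0 hC1 hr0 (sub_lt_self _ (by positivity))
    (pow_le_tailSum_of_couples hC h0 hC1 hcpl) hy
  rw [sub_sub_cancel, one_div, log_inv, neg_neg] at hH
  rw [one_div] at hn
  rw [logb, div_add' _ _ _ hlog2.ne', div_lt_iff₀ hlog2]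
  linarith
end

section
/- Let U_n be the uniform distribution on n states (each value 1/n), and let G′ be the sequence defined recursively by G′(i) = max_{1≤j≤n} (∑_{k=1}^{j} U_n(k) − ∑_{k=1}^{i−1} G′(k)) / j. Then for every i ≥ 1, G′(i) = (1/n)·(1−1/n)^{i−1}. -/
open Finset

/-! Once mass `S ≥ 0` has been spent, the `j`-th candidate is `1/n - S/(j+1)`, largest at
`j + 1 = n`. So each greedy value is a `1/n` fraction of the remaining mass `1 - S`, and the
remaining mass decays like `(1 - 1/n)^i`. -/

lemma sum_Iic_one_div_sub_div (n : ℕ) (j : Fin n) (S : ℝ) :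
    ((∑ _k ∈ Iic j, (1 / n : ℝ)) - S) / ((j : ℝ) + 1) = 1 / n - S / ((j : ℝ) + 1) := by
  rw [sum_const, Fin.card_Iic, nsmul_eq_mul]
  push_cast
  field_simp

lemma sup'_sum_Iic_one_div_sub_div (n : ℕ) [NeZero n] {S : ℝ} (hS : 0 ≤ S) :
    (univ.sup' univ_nonempty fun j : Fin n =>
      ((∑ _k ∈ Iic j, (1 / n : ℝ)) - S) / ((j : ℝ) + 1)) = (1 - S) / n := by
  obtain ⟨m, rfl⟩ := Nat.exists_eq_succ_of_ne_zero (NeZero.ne n)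
  simp only [sum_Iic_one_div_sub_div]
  refine le_antisymm (sup'_le _ _ fun j _ => ?_) ?_
  · have hj : (j : ℝ) + 1 ≤ (m + 1 : ℕ) := by exact_mod_cast j.isLt
    have := div_le_div_of_nonneg_left hS (by positivity) hj
    rw [sub_div]
    linarith
  · convert le_sup' (fun j : Fin (m + 1) => 1 / ((m + 1 : ℕ) : ℝ) - S / ((j : ℝ) + 1))
      (mem_univ (Fin.last m)) using 1
    simp only [Fin.val_last]
    push_cast
    ring

/-- **Claim 7 (greedy on the majorizing set of the uniform distribution).**
Let `U_n` be the uniform distribution on `n` states and `G'` the sequence with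
`G' i = max_{1≤j≤n} (∑_{k=1}^{j} U_n k − ∑_{k<i} G' k)/j`.  Then for every `i`
(0-indexed here, matching the paper's `i ≥ 1`), `G' i = (1/n)·(1−1/n)^i`. -/
theorem greedy_on_uniform_majorizing_set_geometric
    (n : ℕ) [NeZero n] (G' : ℕ → ℝ)
    (hG' : ∀ i, G' i = univ.sup' univ_nonempty fun j : Fin n =>
      ((∑ k ∈ Iic j, (1 / n : ℝ)) - ∑ k ∈ Finset.range i, G' k) / ((j : ℝ) + 1)) :
    ∀ i : ℕ, G' i = (1 / n) * (1 - 1 / n) ^ i := by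
  have hn : (1 : ℝ) ≤ n := Nat.one_le_cast.2 (Nat.pos_of_ne_zero (NeZero.ne n))
  have hratio₀ : 0 ≤ 1 - 1 / (n : ℝ) := sub_nonneg.2 (div_le_one_of_le₀ hn (by positivity))
  have hratio₁ : 1 - 1 / (n : ℝ) ≤ 1 := sub_le_self _ (by positivity)
  have hmass : ∀ i, 0 ≤ 1 - (1 - 1 / (n : ℝ)) ^ i := fun i =>
    sub_nonneg.2 (pow_le_one₀ hratio₀ hratio₁)
  have hsum : ∀ i, ∑ k ∈ range i, G' k = 1 - (1 - 1 / n) ^ i := by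
    intro i
    induction i with
    | zero => simp
    | succ i ih =>
      rw [sum_range_succ, hG', ih, sup'_sum_Iic_one_div_sub_div n (hmass i)]
      ring
  intro i
  rw [hG', hsum, sup'_sum_Iic_one_div_sub_div n (hmass i)]
  ring
end

section
/- For an integer n ≥ 2, the distribution g with g(i) = (1/n)·(1−1/n)^{i−1} for i = 1,2,… has entropy H(g) = log₂(n) + (n−1)·log₂(n/(n−1)), and lim_{n→∞} (n−1)·log₂(n/(n−1)) = log₂(e); hence H(g) − log₂(n) tends to log₂(e) as n → ∞. -/
/-!
Write `q = 1 - p` for the geometric distribution `p q^i`. Its self-information splits as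
`log (1/p) + i log (1/q)`, so the entropy is `log (1/p)` (the total mass is `1`) plus
`log (1/q)` times the mean `q/p`; at `p = 1/n` this is `log n + (n-1) log (n/(n-1))`.
The limit is `x log (1 + 1/x) → 1` at `x = n - 1`.
-/

open Filter Real Topology

theorem hasSum_geometric_mul_logb_inv (b : ℝ) {p : ℝ} (hp₀ : 0 < p) (hp₁ : p < 1) :
    HasSum (fun i : ℕ => (p * (1 - p) ^ i) * logb b (p * (1 - p) ^ i)⁻¹)
      (logb b p⁻¹ + (1 - p) / p * logb b (1 - p)⁻¹) := by
  set q := 1 - p with hq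
  have hq₀ : 0 < q := by linarith
  have hq₁ : ‖q‖ < 1 := by rw [norm_of_nonneg hq₀.le]; linarith
  have hterm : ∀ i : ℕ, (p * q ^ i) * logb b (p * q ^ i)⁻¹
      = logb b p⁻¹ * (p * q ^ i) + logb b q⁻¹ * (p * (i * q ^ i)) := by
    intro i
    rw [mul_inv, logb_mul (by positivity) (by positivity), ← inv_pow, logb_pow]
    ring
  have hpq : 1 - q = p := sub_sub_cancel 1 p
  have hmass : HasSum (fun i : ℕ => p * q ^ i) 1 := by
    simpa [hpq, hp₀.ne'] using (hasSum_geometric_of_norm_lt_one hq₁).mul_left p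
  have hmean : HasSum (fun i : ℕ => p * (i * q ^ i)) (q / p) := by
    have h := (hasSum_coe_mul_geometric_of_norm_lt_one hq₁).mul_left p
    rwa [hpq, show p * (q / p ^ 2) = q / p by field_simp] at h
  simp_rw [hterm]
  have h := (hmass.mul_left (logb b p⁻¹)).add (hmean.mul_left (logb b q⁻¹))
  rwa [mul_one, mul_comm (logb b q⁻¹)] at h

theorem tendsto_sub_one_mul_logb_div_sub_one (b : ℝ) :
    Tendsto (fun x : ℝ => (x - 1) * logb b (x / (x - 1))) atTop (𝓝 (logb b (exp 1))) := by
  have hlog : Tendsto (fun x : ℝ => (x - 1) * log (1 + 1 / (x - 1))) atTop (𝓝 1) :=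
    (tendsto_mul_log_one_add_div_atTop 1).comp (tendsto_atTop_add_const_right _ (-1) tendsto_id)
  rw [logb, log_exp]
  refine (hlog.div_const (log b)).congr' ?_
  filter_upwards [eventually_gt_atTop 1] with x hx
  have hx₁ : x - 1 ≠ 0 := by linarith
  rw [logb, ← mul_div_assoc, one_add_div hx₁, sub_add_cancel]

/-- **Claim 7' (entropy of the geometric greedy coupling of the uniform majorizing set).**
For integer `n ≥ 2`, the distribution `g i = (1/n)(1−1/n)^{i}` (`i : ℕ`, 0-indexed) has
entropy `H(g) = log₂ n + (n−1)·log₂(n/(n−1))`; moreover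
`(n−1)·log₂(n/(n−1)) → log₂ e` as `n → ∞`, hence `H(g) − log₂ n → log₂ e`. -/
theorem geometric_entropy_formula_and_limit :
    (∀ n : ℕ, 2 ≤ n →
      (∑' i : ℕ, ((1 / n : ℝ) * (1 - 1 / n) ^ i) *
          Real.logb 2 ((1 / (n : ℝ)) * (1 - 1 / n) ^ i)⁻¹) =
        Real.logb 2 n + ((n : ℝ) - 1) * Real.logb 2 ((n : ℝ) / ((n : ℝ) - 1))) ∧
    Tendsto (fun n : ℕ => ((n : ℝ) - 1) * Real.logb 2 ((n : ℝ) / ((n : ℝ) - 1)))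
      atTop (nhds (Real.logb 2 (Real.exp 1))) ∧
    Tendsto (fun n : ℕ =>
        (∑' i : ℕ, ((1 / n : ℝ) * (1 - 1 / n) ^ i) *
            Real.logb 2 ((1 / (n : ℝ)) * (1 - 1 / n) ^ i)⁻¹) - Real.logb 2 n)
      atTop (nhds (Real.logb 2 (Real.exp 1))) := by
  have hentropy : ∀ n : ℕ, 2 ≤ n →
      (∑' i : ℕ, ((1 / n : ℝ) * (1 - 1 / n) ^ i) *
          logb 2 ((1 / (n : ℝ)) * (1 - 1 / n) ^ i)⁻¹) =
        logb 2 n + ((n : ℝ) - 1) * logb 2 ((n : ℝ) / ((n : ℝ) - 1)) := by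
    intro n hn
    have hn₁ : (1 : ℝ) < n := by exact_mod_cast hn
    rw [(hasSum_geometric_mul_logb_inv 2 (by positivity)
      ((div_lt_one (by positivity)).2 hn₁)).tsum_eq]
    field_simp
  have hlimit := (tendsto_sub_one_mul_logb_div_sub_one 2).comp tendsto_natCast_atTop_atTop
  refine ⟨hentropy, hlimit, hlimit.congr' ?_⟩
  filter_upwards [eventually_ge_atTop 2] with n hn
  rw [Function.comp_apply, hentropy n hn, add_sub_cancel_left]
end

section
/- Let S = {p₁,…,p_m} be a finite set of probability distributions, each on n states. Then there exists a distribution C that couples S (namely the greedy coupling) with H(C) ≤ H(∧S) + log₂(e); in particular, the minimum entropy coupling OPT_S of S satisfies H(OPT_S) ≤ H(∧S) + log₂(e). -/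
/-
The greedy coupling repeatedly takes the largest remaining mass in every row and removes the
smallest of these row maxima from each of them; every step empties an entry, so after at most
`m * n` steps all mass is used. At step `k` the row that determined the atom `C k` has no entry
above `C k`, so each of its `j`-element partial sums is at most `C 0 + ⋯ + C (k-1) + j * C k`.
The prefix sums of `∧S` are the minima of those of the rows, and choosing `k` as the first atom
`≤ ε` and `j` as the number of entries of `∧S` that are `≥ ε` (a prefix, as `∧S` is sorted)
yields, for every `ε > 0`,
  `∑_{C t ≤ ε} C t ≤ ∑_a min (M a) ε`.
Integrating at `ε = exp (-s)` over `s > 0` turns the left side into `H(C)` in nats and the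
right side into `H(∧S) + ∑_a M a = H(∧S) + 1`.
-/

open Finset Real

/-- `C` (a sorted countable distribution) is a coupling of the set of distributions
`p 0, …, p (m-1)` on `n` states: there are index maps `f ℓ` (the `ℓ`-th coordinates
of the joint states) which jointly separate the states of `C` carrying positive mass,
such that the `ℓ`-th marginal is `p ℓ`. -/
def IsCouplingOf {m n : ℕ} (C : ℕ → ℝ) (p : Fin m → Fin n → ℝ) : Prop :=
  Antitone C ∧ (∀ j, 0 ≤ C j) ∧ HasSum C 1 ∧
  ∃ f : Fin m → ℕ → Fin n,
    (∀ j j' : ℕ, C j ≠ 0 → C j' ≠ 0 → (∀ ℓ, f ℓ j = f ℓ j') → j = j') ∧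
    ∀ (ℓ : Fin m) (i : Fin n), ∑' jj : {j : ℕ // f ℓ j = i}, C jj.1 = p ℓ i

/-- The entropy `H(C) = ∑ᵢ C i · log₂ (1 / C i)` of a countable distribution. -/
noncomputable def entC (C : ℕ → ℝ) : ℝ := ∑' j : ℕ, C j * Real.logb 2 (C j)⁻¹

section LayerCake

open MeasureTheory

theorem integrableOn_Ioi_of_abs_le_exp_neg {f : ℝ → ℝ} (hf : Measurable f)
    (hbound : ∀ s, |f s| ≤ exp (-s)) (c : ℝ) : IntegrableOn f (Set.Ioi c) :=
  (integrableOn_exp_neg_Ioi c).mono' hf.aestronglyMeasurable.restrict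
    (ae_of_all _ fun s => by simpa only [norm_eq_abs] using hbound s)

theorem integrableOn_ite_le_exp_neg {x : ℝ} (hx : 0 ≤ x) (c : ℝ) :
    IntegrableOn (fun s => if x ≤ exp (-s) then x else 0) (Set.Ioi c) := by
  refine integrableOn_Ioi_of_abs_le_exp_neg
    (Measurable.ite (measurableSet_le measurable_const (by fun_prop)) measurable_const
      measurable_const) (fun s => ?_) c
  split_ifs with h
  · rwa [abs_of_nonneg hx]
  · simp [(exp_pos _).le]

theorem integrableOn_min_exp_neg {y : ℝ} (hy : 0 ≤ y) (c : ℝ) :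
    IntegrableOn (fun s => min y (exp (-s))) (Set.Ioi c) :=
  integrableOn_Ioi_of_abs_le_exp_neg (by fun_prop)
    (fun s => by rw [abs_of_nonneg (le_min hy (exp_pos _).le)]; exact min_le_right _ _) c

theorem le_exp_neg_iff {x s : ℝ} (hx : 0 < x) : x ≤ exp (-s) ↔ s ≤ log x⁻¹ := by
  rw [← log_le_iff_le_exp hx, log_inv]
  constructor <;> intro h <;> linarith

theorem integral_ite_le_exp_neg {x : ℝ} (hx0 : 0 ≤ x) (hx1 : x ≤ 1) :
    ∫ s in Set.Ioi 0, (if x ≤ exp (-s) then x else 0) = x * log x⁻¹ := by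
  obtain rfl | hx := hx0.eq_or_lt
  · simp
  have hL : 0 ≤ log x⁻¹ := log_nonneg (one_le_inv₀ hx |>.2 hx1)
  rw [← intervalIntegral.integral_interval_add_Ioi (integrableOn_ite_le_exp_neg hx0 0)
    (integrableOn_ite_le_exp_neg hx0 _)]
  have hleft : ∫ s in (0 : ℝ)..log x⁻¹, (if x ≤ exp (-s) then x else 0) = x * log x⁻¹ := by
    rw [intervalIntegral.integral_congr (g := fun _ => x) fun s hs => ?_]
    · simp [mul_comm]
    · rw [Set.uIcc_of_le hL] at hs
      exact if_pos ((le_exp_neg_iff hx).2 hs.2)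
  have hright : ∫ s in Set.Ioi (log x⁻¹), (if x ≤ exp (-s) then x else 0) = 0 := by
    refine setIntegral_eq_zero_of_forall_eq_zero fun s hs => if_neg ?_
    rw [le_exp_neg_iff hx]
    exact not_le.2 hs
  rw [hleft, hright, add_zero]

theorem integral_min_exp_neg {y : ℝ} (hy0 : 0 ≤ y) (hy1 : y ≤ 1) :
    ∫ s in Set.Ioi 0, min y (exp (-s)) = y * log y⁻¹ + y := by
  obtain rfl | hy := hy0.eq_or_lt
  · simp [(exp_pos _).le]
  have hL : 0 ≤ log y⁻¹ := log_nonneg (one_le_inv₀ hy |>.2 hy1)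
  rw [← intervalIntegral.integral_interval_add_Ioi (integrableOn_min_exp_neg hy0 0)
    (integrableOn_min_exp_neg hy0 _)]
  have hleft : ∫ s in (0 : ℝ)..log y⁻¹, min y (exp (-s)) = y * log y⁻¹ := by
    rw [intervalIntegral.integral_congr (g := fun _ => y) fun s hs => ?_]
    · simp [mul_comm]
    · rw [Set.uIcc_of_le hL] at hs
      exact min_eq_left ((le_exp_neg_iff hy).2 hs.2)
  have hright : ∫ s in Set.Ioi (log y⁻¹), min y (exp (-s)) = y := by
    rw [setIntegral_congr_fun measurableSet_Ioi (g := fun s => exp (-s)) fun s hs =>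
      min_eq_right ?_, integral_exp_neg_Ioi, log_inv, neg_neg, exp_log hy]
    · exact le_of_not_ge fun h => (not_le.2 hs) ((le_exp_neg_iff hy).1 h)
  rw [hleft, hright]

theorem sum_mul_log_inv_le_of_forall_sum_le {ι κ : Type*} {s : Finset ι} {u : Finset κ}
    {x : ι → ℝ} {y : κ → ℝ} (hx : ∀ i ∈ s, 0 ≤ x i ∧ x i ≤ 1) (hy : ∀ a ∈ u, 0 ≤ y a ∧ y a ≤ 1)
    (h : ∀ ε > 0, ∑ i ∈ s with x i ≤ ε, x i ≤ ∑ a ∈ u, min (y a) ε) :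
    ∑ i ∈ s, x i * log (x i)⁻¹ ≤ ∑ a ∈ u, y a * log (y a)⁻¹ + ∑ a ∈ u, y a := by
  have hxint : ∀ i ∈ s, IntegrableOn (fun σ => if x i ≤ exp (-σ) then x i else 0) (Set.Ioi 0) :=
    fun i hi => integrableOn_ite_le_exp_neg (hx i hi).1 0
  have hyint : ∀ a ∈ u, IntegrableOn (fun σ => min (y a) (exp (-σ))) (Set.Ioi 0) :=
    fun a ha => integrableOn_min_exp_neg (hy a ha).1 0
  calc ∑ i ∈ s, x i * log (x i)⁻¹
      = ∫ σ in Set.Ioi 0, ∑ i ∈ s, if x i ≤ exp (-σ) then x i else 0 := by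
        rw [integral_finsetSum _ hxint]
        exact sum_congr rfl fun i hi => (integral_ite_le_exp_neg (hx i hi).1 (hx i hi).2).symm
    _ ≤ ∫ σ in Set.Ioi 0, ∑ a ∈ u, min (y a) (exp (-σ)) :=
        setIntegral_mono_on (integrable_finsetSum _ hxint) (integrable_finsetSum _ hyint)
          measurableSet_Ioi fun σ _ => by rw [← sum_filter]; exact h _ (exp_pos _)
    _ = ∑ a ∈ u, y a * log (y a)⁻¹ + ∑ a ∈ u, y a := by
        rw [integral_finsetSum _ hyint, ← sum_add_distrib]
        exact sum_congr rfl fun a ha => integral_min_exp_neg (hy a ha).1 (hy a ha).2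

end LayerCake

theorem isCouplingOf_of_sum_range {m n N : ℕ} {C : ℕ → ℝ} {p : Fin m → Fin n → ℝ}
    (f : Fin m → ℕ → Fin n) (hanti : Antitone C) (hzero : ∀ j, N ≤ j → C j = 0)
    (hsum : ∑ j ∈ range N, C j = 1)
    (hsep : ∀ j j', C j ≠ 0 → C j' ≠ 0 → (∀ ℓ, f ℓ j = f ℓ j') → j = j')
    (hmarg : ∀ ℓ i, ∑ j ∈ range N with f ℓ j = i, C j = p ℓ i) : IsCouplingOf C p := by
  have hzero' : ∀ j ∉ range N, C j = 0 := fun j hj => hzero j (by simpa using hj)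
  refine ⟨hanti, fun j => hzero _ (le_max_right j N) ▸ hanti (le_max_left j N),
    hsum ▸ hasSum_sum_of_ne_finset_zero hzero', f, hsep, fun ℓ i => ?_⟩
  have hind : ∀ j ∉ range N, Set.indicator {j | f ℓ j = i} C j = 0 := fun j hj => by
    simp [hzero' j hj]
  rw [← hmarg, sum_filter]
  refine (tsum_subtype {j | f ℓ j = i} C).trans ((tsum_eq_sum hind).trans ?_)
  simp only [Set.indicator_apply, Set.mem_ofPred_eq]

theorem entC_eq_sum_range {C : ℕ → ℝ} {N : ℕ} (hzero : ∀ j, N ≤ j → C j = 0) :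
    entC C = ∑ j ∈ range N, C j * logb 2 (C j)⁻¹ :=
  tsum_eq_sum fun j hj => by rw [hzero j (by simpa using hj), zero_mul]

theorem sum_mul_logb_inv_le_of_sum_mul_log_inv_le {ι κ : Type*} {s : Finset ι} {u : Finset κ}
    {x : ι → ℝ} {y : κ → ℝ} {b : ℝ} (hb : 1 < b)
    (h : ∑ i ∈ s, x i * log (x i)⁻¹ ≤ ∑ a ∈ u, y a * log (y a)⁻¹ + ∑ a ∈ u, y a) :
    ∑ i ∈ s, x i * logb b (x i)⁻¹ ≤
      ∑ a ∈ u, y a * logb b (y a)⁻¹ + logb b (exp 1) * ∑ a ∈ u, y a := by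
  simp only [logb, log_exp, mul_div_assoc', ← sum_div]
  rw [div_mul_eq_mul_div, one_mul, ← add_div]
  exact div_le_div_of_nonneg_right h (log_pos hb).le

section Meet

variable {ι α : Type*} [Fintype ι] [Nonempty ι] [LinearOrder α] [LocallyFiniteOrderBot α]
  {p : ι → α → ℝ} {M : α → ℝ}

theorem sum_Iic_eq_add_sum_Iio (f : α → ℝ) (i : α) :
    ∑ j ∈ Iic i, f j = f i + ∑ j ∈ Iio i, f j := by
  rw [Iic_eq_cons_Iio, sum_cons]

variable (hM : ∀ i, M i =
  (univ.inf' univ_nonempty fun ℓ => ∑ j ∈ Iic i, p ℓ j) - ∑ j ∈ Iio i, M j)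
include hM

theorem sum_Iic_eq_inf' (i : α) :
    ∑ j ∈ Iic i, M j = univ.inf' univ_nonempty fun ℓ => ∑ j ∈ Iic i, p ℓ j := by
  rw [sum_Iic_eq_add_sum_Iio, hM i, sub_add_cancel]

theorem sum_le_sum_of_isLowerSet {S : Finset α} (hS : IsLowerSet (S : Set α)) (ℓ : ι) :
    ∑ j ∈ S, M j ≤ ∑ j ∈ S, p ℓ j := by
  obtain rfl | hne := S.eq_empty_or_nonempty
  · simp
  have hS : S = Iic (S.max' hne) := ext fun x =>
    ⟨fun hx => mem_Iic.2 (le_max' S x hx), fun hx => hS (mem_Iic.1 hx) (max'_mem S hne)⟩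
  rw [hS, sum_Iic_eq_inf' hM]
  exact inf'_le _ (mem_univ ℓ)

theorem exists_sum_Iic_eq_and_le (i : α) :
    ∃ ℓ, ∑ j ∈ Iic i, M j = ∑ j ∈ Iic i, p ℓ j ∧ p ℓ i ≤ M i := by
  obtain ⟨ℓ, -, hℓ⟩ := exists_mem_eq_inf' univ_nonempty fun ℓ => ∑ j ∈ Iic i, p ℓ j
  rw [← sum_Iic_eq_inf' hM] at hℓ
  refine ⟨ℓ, hℓ, ?_⟩
  have := sum_le_sum_of_isLowerSet hM (S := Iio i) (by simpa using isLowerSet_Iio i) ℓ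
  rw [sum_Iic_eq_add_sum_Iio, sum_Iic_eq_add_sum_Iio] at hℓ
  linarith

theorem meet_nonneg (hpos : ∀ ℓ j, 0 ≤ p ℓ j) (i : α) : 0 ≤ M i := by
  obtain ⟨ℓ, -, hℓ⟩ := exists_sum_Iic_eq_and_le hM i
  exact (hpos ℓ i).trans hℓ

theorem meet_antitone [SuccOrder α] [Finite α] (hsort : ∀ ℓ, Antitone (p ℓ)) : Antitone M := by
  refine antitone_of_succ_le fun i hi => ?_
  obtain ⟨ℓ, hℓ, hle⟩ := exists_sum_Iic_eq_and_le hM i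
  have := sum_le_sum_of_isLowerSet hM (S := Iic (Order.succ i))
    (by simpa using isLowerSet_Iic _) ℓ
  rw [sum_Iic_eq_add_sum_Iio, sum_Iic_eq_add_sum_Iio (p ℓ),
    Iio_succ_eq_Iic_of_not_isMax hi, hℓ] at this
  linarith [hsort ℓ (Order.le_succ i)]

theorem sum_meet [Fintype α] [Nonempty α] (hsum : ∀ ℓ, ∑ j, p ℓ j = 1) : ∑ j, M j = 1 := by
  have htop : Iic (univ.max' univ_nonempty) = (univ : Finset α) :=
    eq_univ_of_forall fun j => mem_Iic.2 (le_max' _ j (mem_univ j))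
  rw [← htop, sum_Iic_eq_inf' hM, htop]
  simp only [hsum, inf'_const]

theorem meet_le_one [Fintype α] [Nonempty α] (hpos : ∀ ℓ j, 0 ≤ p ℓ j)
    (hsum : ∀ ℓ, ∑ j, p ℓ j = 1) (i : α) : M i ≤ 1 :=
  (single_le_sum (fun j _ => meet_nonneg hM hpos j) (mem_univ i)).trans_eq (sum_meet hM hsum)

theorem sum_meet_add_card_mul_le [Fintype α] [SuccOrder α] (hsort : ∀ ℓ, Antitone (p ℓ))
    (ε : ℝ) (ℓ : ι) :
    ∑ j, M j + #{j | ε ≤ M j} * ε ≤ ∑ j, min (M j) ε + ∑ j with ε ≤ M j, p ℓ j := by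
  have hlow : IsLowerSet (({j | ε ≤ M j} : Finset α) : Set α) := fun a b hba ha => by
    simp only [coe_filter, mem_univ, true_and, Set.mem_ofPred_eq] at ha ⊢
    exact ha.trans (meet_antitone hM hsort hba)
  have := sum_le_sum_of_isLowerSet hM hlow ℓ
  rw [← sum_filter_add_sum_filter_not univ (fun j => ε ≤ M j),
    ← sum_filter_add_sum_filter_not univ (fun j => ε ≤ M j) (fun j => min (M j) ε),
    sum_congr rfl fun j hj => min_eq_right (mem_filter.1 hj).2,
    sum_congr rfl fun j hj => min_eq_left (le_of_lt (not_le.1 (mem_filter.1 hj).2)),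
    sum_const, nsmul_eq_mul]
  linarith

end Meet

namespace GreedyCoupling

variable {ι α : Type*} [Fintype α] [Nonempty α]

noncomputable def peak (r : ι → α → ℝ) (ℓ : ι) : α := (Finite.exists_max (r ℓ)).choose

theorem le_peak (r : ι → α → ℝ) (ℓ : ι) (i : α) : r ℓ i ≤ r ℓ (peak r ℓ) :=
  (Finite.exists_max (r ℓ)).choose_spec i

variable [Fintype ι] [Nonempty ι]

noncomputable def minRow (r : ι → α → ℝ) : ι :=
  (Finite.exists_min fun ℓ => r ℓ (peak r ℓ)).choose

noncomputable def atom (r : ι → α → ℝ) : ℝ := r (minRow r) (peak r (minRow r))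

theorem atom_le (r : ι → α → ℝ) (ℓ : ι) : atom r ≤ r ℓ (peak r ℓ) :=
  (Finite.exists_min fun ℓ => r ℓ (peak r ℓ)).choose_spec ℓ

theorem le_atom (r : ι → α → ℝ) (i : α) : r (minRow r) i ≤ atom r := le_peak _ _ _

theorem atom_nonneg {r : ι → α → ℝ} (hr : ∀ ℓ i, 0 ≤ r ℓ i) : 0 ≤ atom r := hr _ _

theorem atom_pos {r : ι → α → ℝ} (hr : ∀ ℓ i, 0 ≤ r ℓ i)
    (hbal : ∀ ℓ ℓ', ∑ i, r ℓ i = ∑ i, r ℓ' i) {ℓ : ι} {i : α} (hne : r ℓ i ≠ 0) :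
    0 < atom r := by
  have hrow : 0 < ∑ j, r (minRow r) j :=
    hbal ℓ _ ▸ (lt_of_le_of_ne (hr ℓ i) hne.symm).trans_le
      (single_le_sum (fun j _ => hr ℓ j) (mem_univ i))
  obtain ⟨j, -, hj⟩ := exists_lt_of_sum_lt (by simpa using hrow : ∑ _j : α, (0 : ℝ) < _)
  exact hj.trans_le (le_atom r j)

noncomputable def entries (r : ι → α → ℝ) : Finset (ι × α) := {x | r x.1 x.2 ≠ 0}

variable [DecidableEq α]

noncomputable def step (r : ι → α → ℝ) (ℓ : ι) (i : α) : ℝ :=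
  r ℓ i - if peak r ℓ = i then atom r else 0

theorem step_minRow_peak (r : ι → α → ℝ) : step r (minRow r) (peak r (minRow r)) = 0 := by
  simp [step, atom]

section Nonneg

variable {r : ι → α → ℝ} (hr : ∀ ℓ i, 0 ≤ r ℓ i)
include hr

theorem step_nonneg (ℓ : ι) (i : α) : 0 ≤ step r ℓ i := by
  unfold step
  split_ifs with h
  · exact sub_nonneg.2 (h ▸ atom_le r ℓ)
  · simpa using hr ℓ i

theorem step_le (ℓ : ι) (i : α) : step r ℓ i ≤ r ℓ i := by
  unfold step
  split_ifs
  exacts [sub_le_self _ (atom_nonneg hr), (sub_zero _).le]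

theorem entries_step_subset : entries (step r) ⊆ entries r := fun x hx => by
  simp only [entries, mem_filter, mem_univ, true_and] at hx ⊢
  exact fun h0 => hx (le_antisymm (h0 ▸ step_le hr x.1 x.2) (step_nonneg hr x.1 x.2))

theorem entries_step_ssubset (hbal : ∀ ℓ ℓ', ∑ i, r ℓ i = ∑ i, r ℓ' i)
    (hne : (entries r).Nonempty) : entries (step r) ⊂ entries r := by
  obtain ⟨⟨ℓ, i⟩, hx⟩ := hne
  have hmem : (minRow r, peak r (minRow r)) ∈ entries r := by
    simp only [entries, mem_filter, mem_univ, true_and]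
    exact (atom_pos hr hbal (mem_filter.1 hx).2).ne'
  refine ssubset_of_subset_of_ne (entries_step_subset hr) fun h => ?_
  rw [← h] at hmem
  simp [entries, step_minRow_peak] at hmem

end Nonneg

section State

variable (p : ι → α → ℝ)

noncomputable def state (t : ℕ) : ι → α → ℝ := step^[t] p

noncomputable def mass (t : ℕ) : ℝ := atom (state p t)

noncomputable def coord (ℓ : ι) (t : ℕ) : α := peak (state p t) ℓ

theorem state_succ (t : ℕ) : state p (t + 1) = step (state p t) :=
  Function.iterate_succ_apply' _ _ _

theorem state_add_sum_mass_coord (t : ℕ) (ℓ : ι) (i : α) :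
    state p t ℓ i + ∑ s ∈ range t with coord p ℓ s = i, mass p s = p ℓ i := by
  induction t with
  | zero => simp [state]
  | succ t ih =>
    rw [← ih, sum_filter, sum_filter, sum_range_succ, state_succ]
    unfold step
    rw [sub_add_eq_add_sub, add_sub_assoc]
    exact congrArg _ (add_sub_cancel_right _ _)

theorem sum_state_add_sum_mass (t : ℕ) (ℓ : ι) :
    ∑ i, state p t ℓ i + ∑ s ∈ range t, mass p s = ∑ i, p ℓ i := by
  rw [← sum_fiberwise (range t) (coord p ℓ), ← sum_add_distrib]
  exact sum_congr rfl fun i _ => state_add_sum_mass_coord p t ℓ i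

variable {p} (hpos : ∀ ℓ i, 0 ≤ p ℓ i)
include hpos

theorem state_nonneg (t : ℕ) : ∀ ℓ i, 0 ≤ state p t ℓ i := by
  induction t with
  | zero => exact hpos
  | succ t ih => rw [state_succ]; exact step_nonneg ih

theorem mass_nonneg (t : ℕ) : 0 ≤ mass p t := atom_nonneg (state_nonneg hpos t)

theorem state_antitone (ℓ : ι) (i : α) : Antitone fun t => state p t ℓ i :=
  antitone_nat_of_succ_le fun t => by
    rw [state_succ]
    exact step_le (state_nonneg hpos t) ℓ i

theorem mass_antitone : Antitone (mass p) :=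
  antitone_nat_of_succ_le fun t => by
    let ℓ := minRow (state p t)
    calc mass p (t + 1) ≤ state p (t + 1) ℓ (coord p ℓ (t + 1)) := atom_le _ ℓ
      _ ≤ state p t ℓ (coord p ℓ (t + 1)) := state_antitone hpos ℓ _ t.le_succ
      _ ≤ mass p t := le_atom _ _

-- Step `t` exhausts the row `minRow` at `coord t`, so no later positive atom can sit there.
theorem exists_coord_ne_of_lt {t t' : ℕ} (h : t < t') (hne : mass p t' ≠ 0) :
    ∃ ℓ, coord p ℓ t ≠ coord p ℓ t' := by
  let ℓ := minRow (state p t)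
  refine ⟨ℓ, fun heq => hne (le_antisymm ?_ (mass_nonneg hpos t'))⟩
  have hzero : state p (t + 1) ℓ (coord p ℓ t) = 0 := by
    rw [state_succ]
    exact step_minRow_peak _
  calc mass p t' ≤ state p t' ℓ (coord p ℓ t') := atom_le _ ℓ
    _ ≤ state p (t + 1) ℓ (coord p ℓ t) := heq ▸ state_antitone hpos ℓ _ h
    _ = 0 := hzero

theorem eq_of_forall_coord_eq {t t' : ℕ} (ht : mass p t ≠ 0) (ht' : mass p t' ≠ 0)
    (h : ∀ ℓ, coord p ℓ t = coord p ℓ t') : t = t' := by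
  rcases lt_trichotomy t t' with hlt | heq | hgt
  · obtain ⟨ℓ, hℓ⟩ := exists_coord_ne_of_lt hpos hlt ht'
    exact absurd (h ℓ) hℓ
  · exact heq
  · obtain ⟨ℓ, hℓ⟩ := exists_coord_ne_of_lt hpos hgt ht
    exact absurd (h ℓ).symm hℓ

theorem exists_sum_le_sum_mass_add (t : ℕ) :
    ∃ ℓ, ∀ s : Finset α, ∑ i ∈ s, p ℓ i ≤ ∑ u ∈ range t, mass p u + #s * mass p t := by
  refine ⟨minRow (state p t), fun s => ?_⟩
  let ℓ := minRow (state p t)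
  calc ∑ i ∈ s, p ℓ i
      = ∑ i ∈ s, state p t ℓ i + ∑ i ∈ s, ∑ u ∈ range t with coord p ℓ u = i, mass p u := by
        rw [← sum_add_distrib]
        exact sum_congr rfl fun i _ => (state_add_sum_mass_coord p t ℓ i).symm
    _ ≤ #s * mass p t + ∑ u ∈ range t, mass p u := by
        gcongr with i
        · rw [← nsmul_eq_mul, ← sum_const]
          exact sum_le_sum fun i _ => le_atom _ i
        · rw [← sum_fiberwise (range t) (coord p ℓ)]
          exact sum_le_sum_of_subset_of_nonneg (subset_univ s)
            fun i _ _ => sum_nonneg fun u _ => mass_nonneg hpos u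
    _ = _ := add_comm _ _

variable (hsum : ∀ ℓ, ∑ i, p ℓ i = 1)
include hsum

theorem card_entries_state_le (t : ℕ) :
    #(entries (state p t)) ≤ Fintype.card (ι × α) - t := by
  induction t with
  | zero => exact card_le_univ _
  | succ t ih =>
    rw [state_succ]
    obtain hne | hempty := (entries (state p t)).eq_empty_or_nonempty.symm
    · have hbal : ∀ ℓ ℓ', ∑ i, state p t ℓ i = ∑ i, state p t ℓ' i := fun ℓ ℓ' => by
        linarith [sum_state_add_sum_mass p t ℓ, sum_state_add_sum_mass p t ℓ', hsum ℓ, hsum ℓ']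
      have := card_lt_card (entries_step_ssubset (state_nonneg hpos t) hbal hne)
      omega
    · have := entries_step_subset (state_nonneg hpos t)
      rw [hempty, subset_empty] at this
      simp [this]

theorem state_eq_zero {t : ℕ} (ht : Fintype.card (ι × α) ≤ t) (ℓ : ι) (i : α) :
    state p t ℓ i = 0 := by
  have hempty : entries (state p t) = ∅ :=
    card_eq_zero.1 (Nat.le_zero.1 ((card_entries_state_le hpos hsum t).trans_eq (by omega)))
  by_contra h
  exact (eq_empty_iff_forall_notMem.1 hempty) (ℓ, i) (by simpa [entries] using h)

theorem mass_eq_zero {t : ℕ} (ht : Fintype.card (ι × α) ≤ t) : mass p t = 0 :=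
  state_eq_zero hpos hsum ht _ _

theorem sum_mass : ∑ t ∈ range (Fintype.card (ι × α)), mass p t = 1 := by
  let ℓ : ι := Classical.arbitrary ι
  have := sum_state_add_sum_mass p (Fintype.card (ι × α)) ℓ
  rwa [sum_congr rfl fun i _ => state_eq_zero hpos hsum le_rfl ℓ i, sum_const_zero, zero_add,
    hsum] at this

theorem sum_mass_coord (ℓ : ι) (i : α) :
    ∑ t ∈ range (Fintype.card (ι × α)) with coord p ℓ t = i, mass p t = p ℓ i := by
  have := state_add_sum_mass_coord p (Fintype.card (ι × α)) ℓ i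
  rwa [state_eq_zero hpos hsum le_rfl, zero_add] at this

theorem mass_le_one (t : ℕ) : mass p t ≤ 1 := by
  rcases lt_or_ge t (Fintype.card (ι × α)) with ht | ht
  · exact (single_le_sum (fun t _ => mass_nonneg hpos t) (mem_range.2 ht)).trans_eq
      (sum_mass hpos hsum)
  · exact (mass_eq_zero hpos hsum ht).trans_le zero_le_one

end State

theorem isCouplingOf_mass {m n : ℕ} [NeZero m] [NeZero n] {p : Fin m → Fin n → ℝ}
    (hpos : ∀ ℓ i, 0 ≤ p ℓ i) (hsum : ∀ ℓ, ∑ i, p ℓ i = 1) : IsCouplingOf (mass p) p :=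
  isCouplingOf_of_sum_range (coord p) (mass_antitone hpos) (fun _ => mass_eq_zero hpos hsum)
    (sum_mass hpos hsum) (fun _ _ => eq_of_forall_coord_eq hpos) (sum_mass_coord hpos hsum)

theorem sum_mass_le_sum_min_meet {ι α : Type*} [Fintype ι] [Nonempty ι] [Fintype α] [Nonempty α]
    [DecidableEq α] [LinearOrder α] [LocallyFiniteOrderBot α] [SuccOrder α]
    {p : ι → α → ℝ} {M : α → ℝ} (hsort : ∀ ℓ, Antitone (p ℓ)) (hpos : ∀ ℓ i, 0 ≤ p ℓ i)
    (hsum : ∀ ℓ, ∑ i, p ℓ i = 1)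
    (hM : ∀ i, M i = (univ.inf' univ_nonempty fun ℓ => ∑ j ∈ Iic i, p ℓ j) - ∑ j ∈ Iio i, M j)
    {ε : ℝ} (hε : 0 < ε) :
    ∑ t ∈ range (Fintype.card (ι × α)) with mass p t ≤ ε, mass p t ≤ ∑ a, min (M a) ε := by
  have hlast : mass p (Fintype.card (ι × α)) ≤ ε := (mass_eq_zero hpos hsum le_rfl).trans_le hε.le
  have hex : ∃ κ, mass p κ ≤ ε := ⟨_, hlast⟩
  let κ := Nat.find hex
  have hκ : κ ≤ Fintype.card (ι × α) := Nat.find_min' hex hlast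
  have hsmall : ∑ t ∈ range (Fintype.card (ι × α)) with mass p t ≤ ε, mass p t ≤
      1 - ∑ t ∈ range κ, mass p t := by
    rw [← sum_mass hpos hsum, ← sum_range_add_sum_Ico _ hκ, add_sub_cancel_left]
    refine sum_le_sum_of_subset_of_nonneg (fun t ht => ?_) fun t _ _ => mass_nonneg hpos t
    rw [mem_filter, mem_range] at ht
    exact mem_Ico.2 ⟨Nat.find_min' hex ht.2, ht.1⟩
  obtain ⟨ℓ, hℓ⟩ := exists_sum_le_sum_mass_add hpos κ
  have hrow := hℓ {a | ε ≤ M a}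
  have hmeet := sum_meet_add_card_mul_le hM hsort ε ℓ
  have hatom : (#{a | ε ≤ M a} : ℝ) * mass p κ ≤ #{a | ε ≤ M a} * ε :=
    mul_le_mul_of_nonneg_left (Nat.find_spec hex) (Nat.cast_nonneg _)
  rw [sum_meet hM hsum] at hmeet
  linarith

end GreedyCoupling

/-- **Corollary (minimum entropy coupling is within `log₂ e` of `H(∧S)`).**
For any set `S = {p₁,…,p_m}` of sorted distributions on `n` states, with `M` the sorted
value sequence of `∧S`, there exists a coupling `C` of `S` (namely the greedy coupling)
with `H(C) ≤ H(∧S) + log₂ e`; in particular every minimum entropy coupling `OPT` of `S`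
satisfies `H(OPT) ≤ H(∧S) + log₂ e`. -/
theorem min_entropy_coupling_le_meet_add_log2e
    (m n : ℕ) [NeZero m] [NeZero n]
    (p : Fin m → Fin n → ℝ)
    (hsort : ∀ ℓ, Antitone (p ℓ)) (hpos : ∀ ℓ k, 0 ≤ p ℓ k) (hsum : ∀ ℓ, ∑ k, p ℓ k = 1)
    (M : Fin n → ℝ)
    (hM : ∀ i, M i =
      (univ.inf' univ_nonempty fun ℓ => ∑ j ∈ Iic i, p ℓ j) - ∑ j ∈ Iio i, M j) :
    (∃ C : ℕ → ℝ, IsCouplingOf C p ∧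
      entC C ≤ (∑ i, M i * Real.logb 2 (M i)⁻¹) + Real.logb 2 (Real.exp 1)) ∧
    (∀ OPT : ℕ → ℝ, IsCouplingOf OPT p →
      (∀ C' : ℕ → ℝ, IsCouplingOf C' p → entC OPT ≤ entC C') →
      entC OPT ≤ (∑ i, M i * Real.logb 2 (M i)⁻¹) + Real.logb 2 (Real.exp 1)) := by
  have hcoup := GreedyCoupling.isCouplingOf_mass hpos hsum
  have hnats := sum_mul_log_inv_le_of_forall_sum_le
    (fun t _ => ⟨GreedyCoupling.mass_nonneg hpos t, GreedyCoupling.mass_le_one hpos hsum t⟩)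
    (fun i _ => ⟨meet_nonneg hM hpos i, meet_le_one hM hpos hsum i⟩)
    fun ε hε => GreedyCoupling.sum_mass_le_sum_min_meet hsort hpos hsum hM hε
  have hent : entC (GreedyCoupling.mass p) ≤
      (∑ i, M i * Real.logb 2 (M i)⁻¹) + Real.logb 2 (Real.exp 1) := by
    rw [entC_eq_sum_range fun t => GreedyCoupling.mass_eq_zero hpos hsum]
    simpa only [sum_meet hM hsum, mul_one] using
      sum_mul_logb_inv_le_of_sum_mul_log_inv_le one_lt_two hnats
  exact ⟨⟨_, hcoup, hent⟩, fun OPT _ hOPT => (hOPT _ hcoup).trans hent⟩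
end
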